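/- Every module of an optimal configuration has at least one potential edge to or from it: if C is an optimal configuration over (V, E), then for every nontrivial module m ∈ C there exists a vertex v ∈ V with (v, u) ∈ E for every u ∈ m, or there exists a vertex v ∈ V with (u, v) ∈ E for every u ∈ m. -/

import Mathlib

/-- A configuration over `(V, E)`: a family of nonempty subsets of `V` that
contains every singleton and is laminar (any two members are nested or
disjoint). -/
def IsConfig {V : Type*} [Fintype V] [DecidableEq V] (M : Finset (Finset V)) : Prop :=
  (∀ m ∈ M, m.Nonempty) ∧ (∀ v : V, {v} ∈ M) ∧
    ∀ m ∈ M, ∀ n ∈ M, m ⊆ n ∨ n ⊆ m ∨ m ∩ n = ∅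

/-- `p = (m, n)` is a possible edge of the configuration `M`:
`m, n ∈ M`, `m × n ⊆ E`, and `m = n` or `m ∩ n = ∅`. -/
def PossEdge {V : Type*} [DecidableEq V] (E : Set (V × V)) (M : Finset (Finset V))
    (p : Finset V × Finset V) : Prop :=
  p.1 ∈ M ∧ p.2 ∈ M ∧ (∀ u ∈ p.1, ∀ v ∈ p.2, (u, v) ∈ E) ∧ (p.1 = p.2 ∨ p.1 ∩ p.2 = ∅)

/-- The possible edge `p` is dominated by some other possible edge `q`,
i.e. `q ≠ p`, `p.1 ⊆ q.1` and `p.2 ⊆ q.2`. -/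
def Dominated {V : Type*} [DecidableEq V] (E : Set (V × V)) (M : Finset (Finset V))
    (p : Finset V × Finset V) : Prop :=
  ∃ q : Finset V × Finset V, PossEdge E M q ∧ q ≠ p ∧ p.1 ⊆ q.1 ∧ p.2 ⊆ q.2

/-- The set `R(M)` of representative edges of the configuration `M`: the
possible edges not dominated by any other possible edge. -/
def RepEdges {V : Type*} [DecidableEq V] (E : Set (V × V)) (M : Finset (Finset V)) :
    Set (Finset V × Finset V) :=
  {p | PossEdge E M p ∧ ¬ Dominated E M p}

/-- A configuration `C` is optimal if it minimises the number of representative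
edges among all configurations, and no proper subfamily of `C` that is itself a
configuration has the same number of representative edges. -/
def IsOptimal {V : Type*} [Fintype V] [DecidableEq V] (E : Set (V × V))
    (C : Finset (Finset V)) : Prop :=
  IsConfig C ∧ (∀ C' : Finset (Finset V), IsConfig C' → (RepEdges E C).ncard ≤ (RepEdges E C').ncard) ∧
    ∀ D ⊆ C, D ≠ C → IsConfig D → (RepEdges E D).ncard ≠ (RepEdges E C).ncard


/-!
If a nontrivial module `m` of `C` had neither a common in-neighbor nor a common
out-neighbor, it could occur in no possible edge, since every member of a configuration is
nonempty. Deleting `m` from `C` then leaves a configuration (singletons are untouched as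
`|m| ≥ 2`) with exactly the same possible edges, hence the same representative edges,
contradicting the minimality clause of optimality.
-/

section

variable {V : Type*} [DecidableEq V]

theorem IsConfig.erase [Fintype V] {M : Finset (Finset V)} (hM : IsConfig M) {m : Finset V}
    (hm : 2 ≤ m.card) : IsConfig (M.erase m) := by
  obtain ⟨hne, hsing, hlam⟩ := hM
  refine ⟨fun n hn => hne n (Finset.mem_of_mem_erase hn), fun v => ?_,
    fun a ha b hb => hlam a (Finset.mem_of_mem_erase ha) b (Finset.mem_of_mem_erase hb)⟩
  refine Finset.mem_erase.2 ⟨?_, hsing v⟩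
  rintro rfl
  simp at hm

theorem possEdge_erase_iff {E : Set (V × V)} {M : Finset (Finset V)} {m : Finset V}
    {p : Finset V × Finset V} :
    PossEdge E (M.erase m) p ↔ PossEdge E M p ∧ p.1 ≠ m ∧ p.2 ≠ m := by
  simp only [PossEdge, Finset.mem_erase]
  tauto

theorem PossEdge.exists_out_neighbor {E : Set (V × V)} {M : Finset (Finset V)}
    {p : Finset V × Finset V} (hp : PossEdge E M p) (h2 : p.2.Nonempty) :
    ∃ v, ∀ u ∈ p.1, (u, v) ∈ E :=
  h2.imp fun v hv u hu => hp.2.2.1 u hu v hv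

theorem PossEdge.exists_in_neighbor {E : Set (V × V)} {M : Finset (Finset V)}
    {p : Finset V × Finset V} (hp : PossEdge E M p) (h1 : p.1.Nonempty) :
    ∃ v, ∀ u ∈ p.2, (v, u) ∈ E :=
  h1.imp fun v hv u hu => hp.2.2.1 v hv u hu

theorem repEdges_congr {E : Set (V × V)} {M M' : Finset (Finset V)}
    (h : ∀ p, PossEdge E M p ↔ PossEdge E M' p) : RepEdges E M = RepEdges E M' := by
  ext p
  simp only [RepEdges, Dominated, Set.mem_ofPred_eq, h]

end

/-- Every module of an optimal configuration has at least one
potential edge to or from it: if `C` is an optimal configuration over `(V, E)`,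
then for every nontrivial module `m ∈ C` there exists a vertex `v ∈ V` with
`(v, u) ∈ E` for every `u ∈ m`, or there exists a vertex `v ∈ V` with
`(u, v) ∈ E` for every `u ∈ m`. -/
theorem statement17 {V : Type*} [Fintype V] [DecidableEq V] (E : Set (V × V))
    (C : Finset (Finset V)) (hC : IsOptimal E C) :
    ∀ m ∈ C, 2 ≤ m.card →
      (∃ v : V, ∀ u ∈ m, (v, u) ∈ E) ∨ (∃ v : V, ∀ u ∈ m, (u, v) ∈ E) := by
  intro m hm hcard
  by_contra! ⟨hno_in, hno_out⟩
  obtain ⟨hconf, -, hmin⟩ := hC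
  have hposs : ∀ p, PossEdge E (C.erase m) p ↔ PossEdge E C p := fun p => by
    refine possEdge_erase_iff.trans ⟨And.left, fun hp => ⟨hp, ?_, ?_⟩⟩
    · intro hp1
      obtain ⟨v, hv⟩ := hp.exists_out_neighbor (hconf.1 _ hp.2.1)
      obtain ⟨u, hu, huv⟩ := hno_out v
      exact huv (hv u (hp1 ▸ hu))
    · intro hp2
      obtain ⟨v, hv⟩ := hp.exists_in_neighbor (hconf.1 _ hp.1)
      obtain ⟨u, hu, hvu⟩ := hno_in v
      exact hvu (hv u (hp2 ▸ hu))
  exact hmin _ (C.erase_subset m) (Finset.erase_ne_self.2 hm) (hconf.erase hcard)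
    (by rw [repEdges_congr hposs])
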